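/- Let π̄* be an optimal policy of the cost-based MDP M̄ (minimizing the expected discounted cost from every state), with value functions Q̄* and V̄*, and set Ā*(s,a) = Q̄*(s,a) − Q̄*(s, π̄*). Let G = (Q̄, μ, 0) be an admissible intervention rule with threshold 0 satisfying Q̄(d_0, μ) = V̄*(d_0), let π be any policy, and let π' = G(π) be the shielded policy. Then for every state s with d^{π'}(s) > 0 and every a ∈ A, Ā(s,a) ≥ Ā*(s,a). -/

import Mathlib

open scoped BigOperators Classical

noncomputable section

namespace SafeRL

variable {S A : Type*} [Fintype S] [Fintype A] [Nonempty A]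

/-- `d` is a probability distribution on the finite type `S`. -/
def IsDist (d : S → ℝ) : Prop := (∀ s, 0 ≤ d s) ∧ ∑ s, d s = 1

/-- `P` is a transition kernel. -/
def IsKernel (P : S → A → S → ℝ) : Prop := ∀ s a, IsDist (P s a)

/-- `π` is a (Markov stationary stochastic) policy. -/
def IsPolicy (π : S → A → ℝ) : Prop := ∀ s, (∀ a, 0 ≤ π s a) ∧ ∑ a, π s a = 1

/-- Point mass at `s`. -/
def pureDist (s : S) : S → ℝ := fun s' => if s' = s then 1 else 0

/-- One-step state-distribution update under policy `π`. -/
def step (P : S → A → S → ℝ) (π : S → A → ℝ) (d : S → ℝ) : S → ℝ :=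
  fun s' => ∑ s, ∑ a, d s * π s a * P s a s'

/-- State distribution at time `t` when running `π` from `d0`. -/
def distAt (P : S → A → S → ℝ) (π : S → A → ℝ) (d0 : S → ℝ) (t : ℕ) : S → ℝ :=
  (step P π)^[t] d0

/-- Expected discounted return `V^π(d0)` of policy `π` from initial distribution `d0`. -/
def value (P : S → A → S → ℝ) (π : S → A → ℝ) (r : S → A → ℝ) (γ : ℝ) (d0 : S → ℝ) : ℝ :=
  ∑' t : ℕ, γ ^ t * ∑ s, ∑ a, distAt P π d0 t s * π s a * r s a

/-- State value function `V^π(s)`. -/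
def vf (P : S → A → S → ℝ) (π : S → A → ℝ) (r : S → A → ℝ) (γ : ℝ) (s : S) : ℝ :=
  value P π r γ (pureDist s)

/-- State-action value function `Q^π(s,a)`. -/
def qf (P : S → A → S → ℝ) (π : S → A → ℝ) (r : S → A → ℝ) (γ : ℝ) (s : S) (a : A) : ℝ :=
  r s a + γ * ∑ s', P s a s' * vf P π r γ s'

/-- The cost function `c(s,a) = 1{s = s_▷}` of the cost-based MDP. -/
def cost (sbad : S) : S → A → ℝ := fun s _ => if s = sbad then 1 else 0

/-- Discounted state distribution `d^π(s)`. -/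
def dsd (P : S → A → S → ℝ) (π : S → A → ℝ) (γ : ℝ) (d0 : S → ℝ) (s : S) : ℝ :=
  (1 - γ) * ∑' t : ℕ, γ ^ t * distAt P π d0 t s

/-- Discounted state-action distribution `d^π(s,a)`. -/
def dsa (P : S → A → S → ℝ) (π : S → A → ℝ) (γ : ℝ) (d0 : S → ℝ) (s : S) (a : A) : ℝ :=
  (1 - γ) * ∑' t : ℕ, γ ^ t * distAt P π d0 t s * π s a

/-- Probability of the `h`-step trajectory prefix `f` when running `π` from `d`. -/
def prefProb (P : S → A → S → ℝ) (π : S → A → ℝ) :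
    (S → ℝ) → (h : ℕ) → (Fin h → S × A) → ℝ
  | _, 0, _ => 1
  | d, h + 1, f =>
      d (f 0).1 * π (f 0).1 (f 0).2 *
        prefProb P π (P (f 0).1 (f 0).2) h (fun i => f i.succ)

/-- Probability that the `h`-step trajectory prefix generated by `π` from `d0` satisfies `E`. -/
def eventProb (P : S → A → S → ℝ) (π : S → A → ℝ) (d0 : S → ℝ) (h : ℕ)
    (E : (Fin h → S × A) → Prop) : ℝ :=
  ∑ f : Fin h → S × A, if E f then prefProb P π d0 h f else 0

/-- `Q̄(s,μ) = E_{a ∼ μ(·|s)} Q̄(s,a)`. -/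
def Qpol (Qb : S → A → ℝ) (μ : S → A → ℝ) (s : S) : ℝ := ∑ a, μ s a * Qb s a

/-- Advantage-like function `Ā(s,a) = Q̄(s,a) − Q̄(s,μ)`. -/
def Abar (Qb : S → A → ℝ) (μ : S → A → ℝ) (s : S) (a : A) : ℝ := Qb s a - Qpol Qb μ s

/-- The intervention set `I = {(s,a) ∈ S_safe × A : Ā(s,a) > η}`. -/
def intSet (Qb : S → A → ℝ) (μ : S → A → ℝ) (η : ℝ) (sbad sabs : S) : Set (S × A) :=
  {p | p.1 ≠ sbad ∧ p.1 ≠ sabs ∧ η < Abar Qb μ p.1 p.2}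

/-- The shielded policy `π' = G(π)`. -/
def shield (π μ : S → A → ℝ) (I : Set (S × A)) (sbad sabs : S) : S → A → ℝ :=
  fun s a =>
    if s = sbad ∨ s = sabs then π s a
    else (if (s, a) ∈ I then 0 else π s a)
      + μ s a * (1 - ∑ a', if (s, a') ∈ I then π s a' else 0)

/-- `σ`-admissibility of the intervention rule `(Q̄, μ, η)` (the condition does not
involve `η`): on safe states, `Q̄ ∈ [0,γ]` and
`c(s,a) + γ E_{s'∼P(·|s,a)}[Q̄(s',μ)] ≤ Q̄(s,a) + σ`. -/
def SigmaAdmissible (P : S → A → S → ℝ) (Qb : S → A → ℝ) (μ : S → A → ℝ)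
    (γ σ : ℝ) (sbad sabs : S) : Prop :=
  ∀ s, s ≠ sbad → s ≠ sabs → ∀ a : A,
    (0 ≤ Qb s a ∧ Qb s a ≤ γ) ∧
    cost sbad s a + γ * ∑ s', P s a s' * Qpol Qb μ s' ≤ Qb s a + σ

/-- Transition kernel of the absorbing MDP `M̃`; `none` plays the role of `s_†`. -/
def Ptil (P : S → A → S → ℝ) (I : Set (S × A)) : Option S → A → Option S → ℝ :=
  fun s? a s'? =>
    match s? with
    | none => if s'? = none then 1 else 0
    | some s =>
        if (s, a) ∈ I then (if s'? = none then 1 else 0)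
        else
          match s'? with
          | none => 0
          | some s' => P s a s'

/-- Reward of the absorbing MDP `M̃` with penalty `Rt` on the intervention set. -/
def rtil (r : S → A → ℝ) (I : Set (S × A)) (Rt : ℝ) : Option S → A → ℝ :=
  fun s? a =>
    match s? with
    | none => 0
    | some s => if (s, a) ∈ I then Rt else r s a

/-- Extension of a policy on `S` to `S ∪ {s_†}`, uniform at `s_†`. -/
def extPol (π : S → A → ℝ) : Option S → A → ℝ :=
  fun s? a =>
    match s? with
    | none => (Fintype.card A : ℝ)⁻¹
    | some s => π s a

/-- Extension of an initial distribution on `S` to `S ∪ {s_†}`. -/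
def extDist (d0 : S → ℝ) : Option S → ℝ :=
  fun s? => match s? with | none => 0 | some s => d0 s

/-- `P_G(π)`: discounted probability that a trajectory of `π` in `M` visits `I`. -/
def PG (P : S → A → S → ℝ) (π : S → A → ℝ) (d0 : S → ℝ) (γ : ℝ)
    (I : Set (S × A)) : ℝ :=
  (1 - γ) * ∑' h : ℕ, γ ^ h * eventProb P π d0 h (fun f => ∃ i, f i ∈ I)

/-- The deterministic policy associated to a map `g : S → A`. -/
def detPol (g : S → A) : S → A → ℝ := fun s a => if a = g s then 1 else 0

/-- Bellman optimality operator `T̄` of the cost-based MDP. -/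
def Tbar (P : S → A → S → ℝ) (sbad : S) (γ : ℝ) (Q : S → A → ℝ) : S → A → ℝ :=
  fun s a =>
    cost sbad s a +
      γ * ∑ s', P s a s' * Finset.univ.inf' Finset.univ_nonempty (fun a' => Q s' a')

/-!
Admissibility makes `Q̄(·, μ)` a supersolution of the Bellman equation of `μ` in the cost MDP,
so `V̄* ≤ V̄^μ ≤ Q̄(·, μ)` and hence `Q̄* ≤ Q̄`. Call `s` tight when `Q̄(s, μ) = V̄*(s)`; by
`Q̄(d₀, μ) = V̄*(d₀)` every state in the support of `d₀` is tight. At a tight safe state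
`Ā(s, ·) ≥ Q̄*(s, ·) − V̄*(s) ≥ 0`, so the shielded policy only plays actions with `Ā = 0`, and
equality in the admissibility inequality then makes every successor tight. Hence the support of
`d^{π'}` is tight, and there `Ā* = Q̄* − V̄* ≤ Q̄ − Q̄(·, μ) = Ā`.
-/

set_option linter.unusedSectionVars false

lemma eq_of_sum_mul_le_of_le {ι : Type*} [Fintype ι] {w f g : ι → ℝ}
    (hw : ∀ i, 0 ≤ w i) (hfg : ∀ i, f i ≤ g i) (hsum : ∑ i, w i * g i ≤ ∑ i, w i * f i)
    {i : ι} (hi : 0 < w i) : f i = g i := by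
  have hterm : ∀ j ∈ Finset.univ, 0 ≤ w j * (g j - f j) :=
    fun j _ => mul_nonneg (hw j) (sub_nonneg.2 (hfg j))
  have hzero : ∑ j, w j * (g j - f j) = 0 := by
    refine le_antisymm ?_ (Finset.sum_nonneg hterm)
    simpa only [mul_sub, Finset.sum_sub_distrib, sub_nonpos] using hsum
  have := (Finset.sum_eq_zero_iff_of_nonneg hterm).1 hzero i (Finset.mem_univ i)
  rcases mul_eq_zero.1 this with h | h
  · exact absurd h hi.ne'
  · linarith

lemma sum_pureDist_mul (s : S) (f : S → ℝ) : ∑ s', pureDist s s' * f s' = f s := by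
  simp [pureDist]

lemma sum_detPol_mul (g : S → A) (s : S) (f : A → ℝ) : ∑ a, detPol g s a * f a = f (g s) := by
  simp [detPol]

lemma pureDist_isDist (s : S) : IsDist (pureDist s) :=
  ⟨fun s' => by unfold pureDist; positivity, by simp [pureDist]⟩

lemma detPol_isPolicy (g : S → A) : IsPolicy (detPol g) :=
  fun s => ⟨fun a => by unfold detPol; positivity, by simp [detPol]⟩

section MarkovChain

variable {P : S → A → S → ℝ} {π : S → A → ℝ}

lemma distAt_succ (d : S → ℝ) (t : ℕ) : distAt P π d (t + 1) = distAt P π (step P π d) t := by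
  simp [distAt, Function.iterate_succ_apply]

lemma distAt_succ' (d : S → ℝ) (t : ℕ) :
    distAt P π d (t + 1) = step P π (distAt P π d t) := by
  simp [distAt, Function.iterate_succ_apply']

lemma sum_step_mul (d g : S → ℝ) :
    ∑ s', step P π d s' * g s' = ∑ s, ∑ a, d s * π s a * ∑ s', P s a s' * g s' := by
  simp only [step, Finset.sum_mul, Finset.mul_sum, mul_assoc]
  rw [Finset.sum_comm]
  exact Finset.sum_congr rfl fun s _ => Finset.sum_comm

lemma step_pureDist (s : S) : step P π (pureDist s) = fun s' => ∑ a, π s a * P s a s' := by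
  funext s'
  simp [step, pureDist]

lemma step_nonneg (hP : IsKernel P) (hπ : ∀ s a, 0 ≤ π s a) {d : S → ℝ} (hd : ∀ s, 0 ≤ d s)
    (s' : S) : 0 ≤ step P π d s' :=
  Finset.sum_nonneg fun s _ => Finset.sum_nonneg fun a _ =>
    mul_nonneg (mul_nonneg (hd s) (hπ s a)) ((hP s a).1 s')

lemma step_isDist (hP : IsKernel P) (hπ : IsPolicy π) {d : S → ℝ} (hd : IsDist d) :
    IsDist (step P π d) := by
  refine ⟨step_nonneg hP (fun s a => (hπ s).1 a) hd.1, ?_⟩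
  have h := sum_step_mul (P := P) (π := π) d 1
  simp only [Pi.one_apply, mul_one] at h
  simp [h, (hP _ _).2, ← Finset.mul_sum, (hπ _).2, hd.2]

lemma distAt_nonneg (hP : IsKernel P) (hπ : ∀ s a, 0 ≤ π s a) {d : S → ℝ}
    (hd : ∀ s, 0 ≤ d s) (t : ℕ) (s : S) : 0 ≤ distAt P π d t s := by
  induction t generalizing s with
  | zero => exact hd s
  | succ t ih => rw [distAt_succ']; exact step_nonneg hP hπ ih s

lemma distAt_isDist (hP : IsKernel P) (hπ : IsPolicy π) {d : S → ℝ} (hd : IsDist d) (t : ℕ) :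
    IsDist (distAt P π d t) := by
  induction t with
  | zero => exact hd
  | succ t ih => rw [distAt_succ']; exact step_isDist hP hπ ih

lemma distAt_eq_sum_pureDist (d : S → ℝ) (t : ℕ) (s' : S) :
    distAt P π d t s' = ∑ s₀, d s₀ * distAt P π (pureDist s₀) t s' := by
  induction t generalizing s' with
  | zero => simp [distAt, pureDist]
  | succ t ih =>
    simp only [distAt_succ', step, ih, Finset.sum_mul, Finset.mul_sum, mul_assoc]
    exact (Finset.sum_congr rfl fun s _ => Finset.sum_comm).trans Finset.sum_comm

lemma distAt_pureDist_of_absorbing (hπ : IsPolicy π) {s : S} (hs : ∀ a, P s a = pureDist s)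
    (t : ℕ) : distAt P π (pureDist s) t = pureDist s := by
  induction t with
  | zero => rfl
  | succ t ih =>
    funext s'
    simp [distAt_succ', ih, step_pureDist, hs, ← Finset.sum_mul, (hπ s).2]

/-- The weight `γ ^ t` lets the invariance hypothesis `hstep` assume `0 < γ`. -/
lemma mem_of_pow_mul_distAt_pos {γ : ℝ} (hP : IsKernel P) (hπ : ∀ s a, 0 ≤ π s a)
    (hγ0 : 0 ≤ γ) {d : S → ℝ} {T : Set S} (h0 : ∀ s, 0 < d s → s ∈ T)
    (hstep : ∀ s ∈ T, ∀ a s', 0 < π s a → 0 < γ * P s a s' → s' ∈ T) :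
    ∀ t s, 0 < γ ^ t * distAt P π d t s → s ∈ T := by
  intro t
  induction t with
  | zero => exact fun s hs => h0 s (by simpa [distAt] using hs)
  | succ t ih =>
    intro s' hs'
    have hsum : ∑ _p : S × A, (0 : ℝ)
        < ∑ p : S × A, γ ^ t * distAt P π d t p.1 * π p.1 p.2 * (γ * P p.1 p.2 s') := by
      convert hs' using 1
      · exact Finset.sum_const_zero
      simp only [Fintype.sum_prod_type, distAt_succ', step, Finset.mul_sum, pow_succ]
      exact Finset.sum_congr rfl fun s _ => Finset.sum_congr rfl fun a _ => by ring
    obtain ⟨⟨s, a⟩, -, ha⟩ := Finset.exists_lt_of_sum_lt hsum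
    have hdπ := pos_of_mul_pos_left ha (mul_nonneg hγ0 ((hP s a).1 s'))
    have hd := pos_of_mul_pos_left hdπ (hπ s a)
    exact hstep s (ih s hd) a s' (pos_of_mul_pos_right hdπ hd.le)
      (pos_of_mul_pos_right ha hdπ.le)

lemma exists_pow_mul_distAt_pos_of_dsd_pos {γ : ℝ} (hγ1 : γ < 1) {d : S → ℝ} {s : S}
    (hs : 0 < dsd P π γ d s) : ∃ t, 0 < γ ^ t * distAt P π d t s := by
  by_contra! h
  exact hs.not_ge (mul_nonpos_of_nonneg_of_nonpos (sub_nonneg.2 hγ1.le) (tsum_nonpos h))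

end MarkovChain

section Value

variable {P : S → A → S → ℝ} {π r : S → A → ℝ} {γ : ℝ}

def rewardAt (P : S → A → S → ℝ) (π r : S → A → ℝ) (d : S → ℝ) (t : ℕ) : ℝ :=
  ∑ s, ∑ a, distAt P π d t s * π s a * r s a

lemma value_eq_tsum_rewardAt (d : S → ℝ) :
    value P π r γ d = ∑' t, γ ^ t * rewardAt P π r d t := rfl

lemma rewardAt_nonneg (hP : IsKernel P) (hπ : ∀ s a, 0 ≤ π s a) (hr0 : ∀ s a, 0 ≤ r s a)
    {d : S → ℝ} (hd : ∀ s, 0 ≤ d s) (t : ℕ) : 0 ≤ rewardAt P π r d t :=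
  Finset.sum_nonneg fun s _ => Finset.sum_nonneg fun a _ =>
    mul_nonneg (mul_nonneg (distAt_nonneg hP hπ hd t s) (hπ s a)) (hr0 s a)

lemma rewardAt_le_one (hP : IsKernel P) (hπ : IsPolicy π) (hr1 : ∀ s a, r s a ≤ 1)
    {d : S → ℝ} (hd : IsDist d) (t : ℕ) : rewardAt P π r d t ≤ 1 := by
  have hdt := distAt_isDist hP hπ hd t
  calc rewardAt P π r d t ≤ ∑ s, ∑ a, distAt P π d t s * π s a :=
        Finset.sum_le_sum fun s _ => Finset.sum_le_sum fun a _ =>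
          mul_le_of_le_one_right (mul_nonneg (hdt.1 s) ((hπ s).1 a)) (hr1 s a)
    _ = 1 := by simp [← Finset.mul_sum, (hπ _).2, hdt.2]

lemma summable_rewardAt (hP : IsKernel P) (hπ : IsPolicy π) (hr0 : ∀ s a, 0 ≤ r s a)
    (hr1 : ∀ s a, r s a ≤ 1) (hγ0 : 0 ≤ γ) (hγ1 : γ < 1) {d : S → ℝ} (hd : IsDist d) :
    Summable fun t => γ ^ t * rewardAt P π r d t :=
  Summable.of_nonneg_of_le
    (fun t => mul_nonneg (pow_nonneg hγ0 t) (rewardAt_nonneg hP (fun s => (hπ s).1) hr0 hd.1 t))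
    (fun t => mul_le_of_le_one_right (pow_nonneg hγ0 t) (rewardAt_le_one hP hπ hr1 hd t))
    (summable_geometric_of_lt_one hγ0 hγ1)

lemma rewardAt_eq_sum_pureDist (d : S → ℝ) (t : ℕ) :
    rewardAt P π r d t = ∑ s₀, d s₀ * rewardAt P π r (pureDist s₀) t := by
  simp only [rewardAt, distAt_eq_sum_pureDist d, Finset.sum_mul, Finset.mul_sum, mul_assoc]
  exact (Finset.sum_congr rfl fun s _ => Finset.sum_comm).trans Finset.sum_comm

lemma value_eq_sum_vf (hP : IsKernel P) (hπ : IsPolicy π) (hr0 : ∀ s a, 0 ≤ r s a)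
    (hr1 : ∀ s a, r s a ≤ 1) (hγ0 : 0 ≤ γ) (hγ1 : γ < 1) (d : S → ℝ) :
    value P π r γ d = ∑ s₀, d s₀ * vf P π r γ s₀ := by
  have hsum := fun s₀ => summable_rewardAt hP hπ hr0 hr1 hγ0 hγ1 (pureDist_isDist s₀)
  simp only [vf, value_eq_tsum_rewardAt, rewardAt_eq_sum_pureDist d, Finset.mul_sum,
    ← tsum_mul_left]
  rw [← Summable.tsum_finsetSum fun s₀ _ => (hsum s₀).mul_left (d s₀)]
  exact tsum_congr fun t => Finset.sum_congr rfl fun s₀ _ => by ring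

lemma value_eq_rewardAt_zero_add (hP : IsKernel P) (hπ : IsPolicy π) (hr0 : ∀ s a, 0 ≤ r s a)
    (hr1 : ∀ s a, r s a ≤ 1) (hγ0 : 0 ≤ γ) (hγ1 : γ < 1) {d : S → ℝ} (hd : IsDist d) :
    value P π r γ d = rewardAt P π r d 0 + γ * value P π r γ (step P π d) := by
  rw [value_eq_tsum_rewardAt, (summable_rewardAt hP hπ hr0 hr1 hγ0 hγ1 hd).tsum_eq_zero_add,
    value_eq_tsum_rewardAt, ← tsum_mul_left]
  simp only [rewardAt, distAt_succ, pow_succ, pow_zero, one_mul]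
  exact congrArg _ (tsum_congr fun t => by ring)

lemma vf_eq_sum_qf (hP : IsKernel P) (hπ : IsPolicy π) (hr0 : ∀ s a, 0 ≤ r s a)
    (hr1 : ∀ s a, r s a ≤ 1) (hγ0 : 0 ≤ γ) (hγ1 : γ < 1) (s : S) :
    vf P π r γ s = ∑ a, π s a * qf P π r γ s a := by
  rw [vf, value_eq_rewardAt_zero_add hP hπ hr0 hr1 hγ0 hγ1 (pureDist_isDist s),
    value_eq_sum_vf hP hπ hr0 hr1 hγ0 hγ1, step_pureDist]
  simp only [rewardAt, distAt, Function.iterate_zero, id_eq, pureDist, ite_mul, one_mul, zero_mul,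
    Finset.sum_ite_irrel, Finset.sum_const_zero, Finset.sum_ite_eq', Finset.mem_univ, ↓reduceIte,
    Finset.sum_mul, Finset.mul_sum, qf, mul_add, Finset.sum_add_distrib, add_right_inj]
  rw [Finset.sum_comm]
  exact Finset.sum_congr rfl fun a _ => Finset.sum_congr rfl fun s' _ => by ring

lemma value_nonneg (hP : IsKernel P) (hπ : ∀ s a, 0 ≤ π s a) (hr0 : ∀ s a, 0 ≤ r s a)
    (hγ0 : 0 ≤ γ) {d : S → ℝ} (hd : ∀ s, 0 ≤ d s) : 0 ≤ value P π r γ d :=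
  tsum_nonneg fun t => mul_nonneg (pow_nonneg hγ0 t) (rewardAt_nonneg hP hπ hr0 hd t)

lemma sum_reward_add_step_le {g : S → ℝ}
    (hg : ∀ s, ∑ a, π s a * (r s a + γ * ∑ s', P s a s' * g s') ≤ g s)
    {e : S → ℝ} (he : ∀ s, 0 ≤ e s) :
    ∑ s, ∑ a, e s * π s a * r s a + γ * ∑ s', step P π e s' * g s' ≤ ∑ s, e s * g s := by
  calc ∑ s, ∑ a, e s * π s a * r s a + γ * ∑ s', step P π e s' * g s'
      = ∑ s, e s * ∑ a, π s a * (r s a + γ * ∑ s', P s a s' * g s') := by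
        simp only [sum_step_mul, Finset.mul_sum, ← Finset.sum_add_distrib]
        refine Finset.sum_congr rfl fun s _ => Finset.sum_congr rfl fun a _ => ?_
        simp only [mul_add, Finset.mul_sum]
        rw [← mul_assoc]
        exact congrArg _ (Finset.sum_congr rfl fun s' _ => by ring)
    _ ≤ ∑ s, e s * g s := Finset.sum_le_sum fun s _ => mul_le_mul_of_nonneg_left (hg s) (he s)

lemma vf_le_of_bellman_le (hP : IsKernel P) (hπ : ∀ s a, 0 ≤ π s a) (hr0 : ∀ s a, 0 ≤ r s a)
    (hγ0 : 0 ≤ γ) {g : S → ℝ} (hg0 : ∀ s, 0 ≤ g s)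
    (hg : ∀ s, ∑ a, π s a * (r s a + γ * ∑ s', P s a s' * g s') ≤ g s) (s : S) :
    vf P π r γ s ≤ g s := by
  set d := pureDist s
  have hd : ∀ s, 0 ≤ d s := (pureDist_isDist s).1
  have hpartial : ∀ n, ∑ t ∈ Finset.range n, γ ^ t * rewardAt P π r d t
      + γ ^ n * ∑ s, distAt P π d n s * g s ≤ ∑ s, d s * g s := by
    intro n
    induction n with
    | zero => simp [distAt]
    | succ n ih =>
      have hstep := mul_le_mul_of_nonneg_left
        (sum_reward_add_step_le hg (distAt_nonneg hP hπ hd n)) (pow_nonneg hγ0 n)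
      rw [Finset.sum_range_succ, distAt_succ', rewardAt, pow_succ]
      linarith
  have htail : ∀ n, 0 ≤ γ ^ n * ∑ s', distAt P π d n s' * g s' := fun n =>
    mul_nonneg (pow_nonneg hγ0 n)
      (Finset.sum_nonneg fun s' _ => mul_nonneg (distAt_nonneg hP hπ hd n s') (hg0 s'))
  calc vf P π r γ s ≤ ∑ s', d s' * g s' :=
        Real.tsum_le_of_sum_range_le
          (fun t => mul_nonneg (pow_nonneg hγ0 t) (rewardAt_nonneg hP hπ hr0 hd t))
          fun n => (le_add_of_nonneg_right (htail n)).trans (hpartial n)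
    _ = g s := sum_pureDist_mul s g

lemma vf_le_qf_of_optimal (hP : IsKernel P) (hr0 : ∀ s a, 0 ≤ r s a) (hr1 : ∀ s a, r s a ≤ 1)
    (hγ0 : 0 ≤ γ) (hγ1 : γ < 1) {πstar : S → A → ℝ} (hπstar : IsPolicy πstar)
    (hopt : ∀ π', IsPolicy π' → ∀ s, vf P πstar r γ s ≤ vf P π' r γ s) (s : S) (a : A) :
    vf P πstar r γ s ≤ qf P πstar r γ s a := by
  choose g hg using fun s => Finite.exists_min (qf P πstar r γ s)
  have hV := vf_eq_sum_qf hP hπstar hr0 hr1 hγ0 hγ1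
  have hgreedy : ∀ s, vf P (detPol g) r γ s ≤ vf P πstar r γ s :=
    vf_le_of_bellman_le hP (fun s => ((detPol_isPolicy g) s).1) hr0 hγ0
      (fun s => value_nonneg hP (fun s => (hπstar s).1) hr0 hγ0 (pureDist_isDist s).1)
      fun s => by
        rw [sum_detPol_mul, hV]
        calc qf P πstar r γ s (g s) = ∑ a, πstar s a * qf P πstar r γ s (g s) := by
              rw [← Finset.sum_mul, (hπstar s).2, one_mul]
          _ ≤ ∑ a, πstar s a * qf P πstar r γ s a :=
              Finset.sum_le_sum fun a _ => mul_le_mul_of_nonneg_left (hg s a) ((hπstar s).1 a)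
  have heq : ∀ s, vf P (detPol g) r γ s = vf P πstar r γ s :=
    fun s => (hgreedy s).antisymm (hopt _ (detPol_isPolicy g) s)
  calc vf P πstar r γ s = vf P (detPol g) r γ s := (heq s).symm
    _ = qf P πstar r γ s (g s) := by
        rw [vf_eq_sum_qf hP (detPol_isPolicy g) hr0 hr1 hγ0 hγ1, sum_detPol_mul]
        simp only [qf, heq]
    _ ≤ qf P πstar r γ s a := hg s a

end Value

lemma cost_nonneg (sbad s : S) (a : A) : 0 ≤ cost sbad s a := by
  unfold cost; positivity

lemma cost_le_one (sbad s : S) (a : A) : cost sbad s a ≤ 1 := by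
  unfold cost; split_ifs <;> norm_num

lemma vf_eq_zero_of_absorbing {P : S → A → S → ℝ} {π r : S → A → ℝ} {γ : ℝ} (hπ : IsPolicy π)
    {s : S} (hs : ∀ a, P s a = pureDist s) (hr : ∀ a, r s a = 0) : vf P π r γ s = 0 := by
  simp [vf, value, distAt_pureDist_of_absorbing hπ hs, pureDist, hr]

lemma Qpol_eq_of_forall {Qb μ : S → A → ℝ} (hμ : IsPolicy μ) {s : S} {c : ℝ}
    (h : ∀ a, Qb s a = c) : Qpol Qb μ s = c := by
  simp [Qpol, h, ← Finset.sum_mul, (hμ s).2]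

section Shield

variable {P : S → A → S → ℝ} {γ : ℝ} {sbad sabs : S} {πstar Qb μ : S → A → ℝ}

lemma Qpol_nonneg (hμ : IsPolicy μ) (hQbad : ∀ a, Qb sbad a = 1) (hQabs : ∀ a, Qb sabs a = 0)
    (hadm : SigmaAdmissible P Qb μ γ 0 sbad sabs) (s : S) : 0 ≤ Qpol Qb μ s := by
  by_cases h1 : s = sbad
  · rw [h1, Qpol_eq_of_forall hμ hQbad]; norm_num
  by_cases h2 : s = sabs
  · rw [h2, Qpol_eq_of_forall hμ hQabs]
  exact Finset.sum_nonneg fun a _ => mul_nonneg ((hμ s).1 a) (hadm s h1 h2 a).1.1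

lemma Qpol_bellman_le (hne : sbad ≠ sabs) (hPbad : ∀ a, P sbad a = pureDist sabs)
    (hPabs : ∀ a, P sabs a = pureDist sabs) (hμ : IsPolicy μ) (hQbad : ∀ a, Qb sbad a = 1)
    (hQabs : ∀ a, Qb sabs a = 0) (hadm : SigmaAdmissible P Qb μ γ 0 sbad sabs) (s : S) :
    ∑ a, μ s a * (cost sbad s a + γ * ∑ s', P s a s' * Qpol Qb μ s') ≤ Qpol Qb μ s := by
  have habs : ∑ s', pureDist sabs s' * Qpol Qb μ s' = 0 := by
    rw [sum_pureDist_mul, Qpol_eq_of_forall hμ hQabs]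
  by_cases h1 : s = sbad
  · subst h1
    simp [hPbad, habs, cost, (hμ _).2, Qpol_eq_of_forall hμ hQbad]
  by_cases h2 : s = sabs
  · subst h2
    simp [hPabs, habs, cost, hne.symm, Qpol_eq_of_forall hμ hQabs]
  exact Finset.sum_le_sum fun a _ =>
    mul_le_mul_of_nonneg_left (by simpa using (hadm s h1 h2 a).2) ((hμ s).1 a)

lemma vf_le_Qpol (hP : IsKernel P) (hγ0 : 0 ≤ γ) (hne : sbad ≠ sabs)
    (hPbad : ∀ a, P sbad a = pureDist sabs) (hPabs : ∀ a, P sabs a = pureDist sabs)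
    (hopt : ∀ π', IsPolicy π' → ∀ s, vf P πstar (cost sbad) γ s ≤ vf P π' (cost sbad) γ s)
    (hμ : IsPolicy μ) (hQbad : ∀ a, Qb sbad a = 1) (hQabs : ∀ a, Qb sabs a = 0)
    (hadm : SigmaAdmissible P Qb μ γ 0 sbad sabs) (s : S) :
    vf P πstar (cost sbad) γ s ≤ Qpol Qb μ s :=
  (hopt μ hμ s).trans <| vf_le_of_bellman_le hP (fun s => (hμ s).1) (cost_nonneg sbad) hγ0
    (Qpol_nonneg hμ hQbad hQabs hadm) (Qpol_bellman_le hne hPbad hPabs hμ hQbad hQabs hadm) s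

lemma qf_le_Qb (hP : IsKernel P) (hγ0 : 0 ≤ γ) (hne : sbad ≠ sabs)
    (hPbad : ∀ a, P sbad a = pureDist sabs) (hPabs : ∀ a, P sabs a = pureDist sabs)
    (hπstar : IsPolicy πstar) (hQbad : ∀ a, Qb sbad a = 1) (hQabs : ∀ a, Qb sabs a = 0)
    (hadm : SigmaAdmissible P Qb μ γ 0 sbad sabs)
    (hvG : ∀ s, vf P πstar (cost sbad) γ s ≤ Qpol Qb μ s) (s : S) (a : A) :
    qf P πstar (cost sbad) γ s a ≤ Qb s a := by
  have habs : ∑ s', pureDist sabs s' * vf P πstar (cost sbad) γ s' = 0 := by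
    rw [sum_pureDist_mul, vf_eq_zero_of_absorbing hπstar hPabs fun a => by simp [cost, hne.symm]]
  by_cases h1 : s = sbad
  · subst h1; simp [qf, hPbad, habs, cost, hQbad]
  by_cases h2 : s = sabs
  · subst h2; simp [qf, hPabs, habs, cost, hne.symm, hQabs]
  have hstep : ∑ s', P s a s' * vf P πstar (cost sbad) γ s' ≤ ∑ s', P s a s' * Qpol Qb μ s' :=
    Finset.sum_le_sum fun s' _ => mul_le_mul_of_nonneg_left (hvG s') ((hP s a).1 s')
  have hγstep := mul_le_mul_of_nonneg_left hstep hγ0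
  have := (hadm s h1 h2 a).2
  unfold qf
  linarith

lemma shield_nonneg {π : S → A → ℝ} (hπ : IsPolicy π) (hμ : IsPolicy μ) (I : Set (S × A))
    (s : S) (a : A) : 0 ≤ shield π μ I sbad sabs s a := by
  have hw : ∑ a', (if (s, a') ∈ I then π s a' else 0) ≤ 1 :=
    (hπ s).2 ▸ Finset.sum_le_sum fun a' _ => by split_ifs <;> simp [(hπ s).1 a']
  unfold shield
  split_ifs
  · exact (hπ s).1 a
  · exact add_nonneg le_rfl (mul_nonneg ((hμ s).1 a) (sub_nonneg.2 hw))
  · exact add_nonneg ((hπ s).1 a) (mul_nonneg ((hμ s).1 a) (sub_nonneg.2 hw))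

/-- Inside the intervention set the shield plays `μ`, whose actions average `Ā(s, ·)` to zero. -/
lemma Abar_nonpos_of_shield_pos {π : S → A → ℝ} (hμ : IsPolicy μ) {s : S} (h1 : s ≠ sbad)
    (h2 : s ≠ sabs) (hA : ∀ b, 0 ≤ Abar Qb μ s b) {a : A}
    (ha : 0 < shield π μ (intSet Qb μ 0 sbad sabs) sbad sabs s a) : Abar Qb μ s a ≤ 0 := by
  by_cases hI : (s, a) ∈ intSet Qb μ 0 sbad sabs
  · have hμa : 0 < μ s a := by
      simp only [shield, h1, h2, hI, or_self, if_false, if_true, zero_add] at ha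
      exact ((hμ s).1 a).lt_of_ne fun h => by simp [← h] at ha
    have hQ : Qpol Qb μ s = Qb s a :=
      eq_of_sum_mul_le_of_le (w := μ s) (f := fun _ => Qpol Qb μ s) (g := Qb s) (hμ s).1
        (fun b => sub_nonneg.1 (hA b))
        (by rw [← Finset.sum_mul, (hμ s).2, one_mul]; rfl) hμa
    simp [Abar, hQ]
  · simpa [intSet, h1, h2] using hI

/-- At a tight state `s` and a shielded action `a`,
`V̄*(s) ≤ Q̄*(s, a) ≤ Q̄(s, a) ≤ Q̄(s, μ) = V̄*(s)`, so the admissibility inequality at `(s, a)` is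
an equality, which forces tightness at every successor. -/
lemma Qpol_eq_vf_of_shield_pos {π : S → A → ℝ} (hP : IsKernel P)
    (hPbad : ∀ a, P sbad a = pureDist sabs) (hPabs : ∀ a, P sabs a = pureDist sabs)
    (hμ : IsPolicy μ) (hadm : SigmaAdmissible P Qb μ γ 0 sbad sabs)
    (hvq : ∀ s a, vf P πstar (cost sbad) γ s ≤ qf P πstar (cost sbad) γ s a)
    (hQle : ∀ s a, qf P πstar (cost sbad) γ s a ≤ Qb s a)
    (hvG : ∀ s, vf P πstar (cost sbad) γ s ≤ Qpol Qb μ s)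
    (htabs : Qpol Qb μ sabs = vf P πstar (cost sbad) γ sabs)
    {s s' : S} {a : A} (hs : Qpol Qb μ s = vf P πstar (cost sbad) γ s)
    (ha : 0 < shield π μ (intSet Qb μ 0 sbad sabs) sbad sabs s a) (hs' : 0 < γ * P s a s') :
    Qpol Qb μ s' = vf P πstar (cost sbad) γ s' := by
  by_cases hunsafe : s = sbad ∨ s = sabs
  · have hPs : P s a = pureDist sabs := by
      rcases hunsafe with rfl | rfl
      exacts [hPbad a, hPabs a]
    obtain rfl : s' = sabs := by
      by_contra h
      simp [hPs, pureDist, h] at hs'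
    exact htabs
  obtain ⟨h1, h2⟩ := not_or.1 hunsafe
  have hγ : 0 < γ := pos_of_mul_pos_left hs' ((hP s a).1 s')
  have hA : Abar Qb μ s a ≤ 0 := Abar_nonpos_of_shield_pos hμ h1 h2
    (fun b => by unfold Abar; linarith [hvq s b, hQle s b]) ha
  have hQ : Qb s a ≤ qf P πstar (cost sbad) γ s a := by
    unfold Abar at hA; linarith [hvq s a]
  have hadm' := (hadm s h1 h2 a).2
  refine (eq_of_sum_mul_le_of_le (w := fun x => γ * P s a x)
    (fun x => mul_nonneg hγ.le ((hP s a).1 x)) hvG ?_ hs').symm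
  simp only [mul_assoc, ← Finset.mul_sum]
  unfold qf at hQ
  linarith

end Shield

/-- on the support of `d^{π'}` the advantage `Ā` of an admissible rule
whose initial value matches `V̄*(d₀)` dominates the optimal advantage `Ā*`. -/
theorem stmt_9
    (P : S → A → S → ℝ) (γ : ℝ) (sbad sabs : S) (d0 : S → ℝ)
    (πstar Qb π μ : S → A → ℝ)
    (hP : IsKernel P) (hγ0 : 0 ≤ γ) (hγ1 : γ < 1)
    (hne : sbad ≠ sabs)
    (hPbad : ∀ a, P sbad a = pureDist sabs)
    (hPabs : ∀ a, P sabs a = pureDist sabs)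
    (hd0 : IsDist d0)
    (hπstar : IsPolicy πstar)
    (hopt : ∀ π', IsPolicy π' → ∀ s,
      vf P πstar (cost sbad) γ s ≤ vf P π' (cost sbad) γ s)
    (hπ : IsPolicy π) (hμ : IsPolicy μ)
    (hQbad : ∀ a : A, Qb sbad a = 1) (hQabs : ∀ a : A, Qb sabs a = 0)
    (hadm : SigmaAdmissible P Qb μ γ 0 sbad sabs)
    (hinit : ∑ s, d0 s * Qpol Qb μ s = ∑ s, d0 s * vf P πstar (cost sbad) γ s) :
    ∀ s, 0 < dsd P (shield π μ (intSet Qb μ 0 sbad sabs) sbad sabs) γ d0 s →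
      ∀ a : A,
        qf P πstar (cost sbad) γ s a - Qpol (qf P πstar (cost sbad) γ) πstar s
          ≤ Abar Qb μ s a := by
  have hvq := vf_le_qf_of_optimal hP (cost_nonneg sbad) (cost_le_one sbad) hγ0 hγ1 hπstar hopt
  have hvG := vf_le_Qpol hP hγ0 hne hPbad hPabs hopt hμ hQbad hQabs hadm
  have hQle := qf_le_Qb hP hγ0 hne hPbad hPabs hπstar hQbad hQabs hadm hvG
  have htabs : Qpol Qb μ sabs = vf P πstar (cost sbad) γ sabs := by
    rw [Qpol_eq_of_forall hμ hQabs,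
      vf_eq_zero_of_absorbing hπstar hPabs fun a => by simp [cost, hne.symm]]
  have htight := mem_of_pow_mul_distAt_pos (T := {s | Qpol Qb μ s = vf P πstar (cost sbad) γ s})
    hP (fun s a => shield_nonneg hπ hμ _ s a) hγ0
    (fun s hs => (eq_of_sum_mul_le_of_le hd0.1 hvG hinit.le hs).symm)
    (fun s hs a s' ha hs' =>
      Qpol_eq_vf_of_shield_pos hP hPbad hPabs hμ hadm hvq hQle hvG htabs hs ha hs')
  intro s hs a
  obtain ⟨t, ht⟩ := exists_pow_mul_distAt_pos_of_dsd_pos hγ1 hs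
  have hVs : Qpol (qf P πstar (cost sbad) γ) πstar s = Qpol Qb μ s :=
    (vf_eq_sum_qf hP hπstar (cost_nonneg sbad) (cost_le_one sbad) hγ0 hγ1 s).symm.trans
      (htight t s ht).symm
  rw [Abar, hVs]
  linarith [hQle s a]

end SafeRL
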